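/- For every function h : 𝕄 × 𝕎 → ℝ, the mediational weighting identity holds: E[ 1{A = a} / π_A(a | W) · r(M, W) · h(M, W) ] = E[ 1{A = a'} / π_A(a' | W) · h(M, W) ] = Σ_{w ∈ 𝕎} P(W = w) · Σ_{m ∈ 𝕄} P(M = m | A = a', W = w) · h(m, w). That is, reweighting the treated (A = a) observations by the odds ratio r(M, W) reproduces expectations under the mediator distribution conditional on A = a'. -/

import Mathlib

open MeasureTheory ProbabilityTheory

/-!
Since `(A, M, W)` takes finitely many values, every weighted expectation is a finite sum against
the joint law `p(α, m, w) = P(A = α, M = m, W = w)`, and every propensity is a ratio of marginals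
of `p`. In the `A = a` sum the odds ratio turns `p(a, m, w) / π_A(a | w)` into
`p(a', m, w) / π_A(a' | w)`: the factors `P(M = m, W = w)`, `P(A = a, W = w)` and `p(a, m, w)`
cancel, which is where positivity is needed. The `A = a'` sum then regroups over `w` as
`P(W = w) · P(M = m | A = a', W = w)`.
-/

theorem integral_comp_eq_sum_measureReal_preimage {Ω β E : Type*} [MeasurableSpace Ω]
    {μ : Measure Ω} [IsFiniteMeasure μ] [Fintype β] [MeasurableSpace β]
    [MeasurableSingletonClass β] [NormedAddCommGroup E] [NormedSpace ℝ E] [CompleteSpace E]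
    {X : Ω → β} (hX : Measurable X) (g : β → E) :
    ∫ ω, g (X ω) ∂μ = ∑ x, μ.real (X ⁻¹' {x}) • g x := by
  rw [← integral_map hX.aemeasurable StronglyMeasurable.of_discrete.aestronglyMeasurable,
    integral_fintype .of_finite]
  simp only [map_measureReal_apply hX (measurableSet_singleton _)]

theorem toReal_cond_apply_eq_div {Ω : Type*} [MeasurableSpace Ω] (μ : Measure Ω) {s : Set Ω}
    (hs : MeasurableSet s) (t : Set Ω) : (μ[|s] t).toReal = μ.real (t ∩ s) / μ.real s := by
  rw [cond_apply hs, ENNReal.toReal_mul, ENNReal.toReal_inv, inv_mul_eq_div, Set.inter_comm]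
  rfl

section Mediation

variable {Ω 𝔸 𝕄 𝕎 : Type*} [MeasurableSpace Ω] {P : Measure Ω} [IsFiniteMeasure P]
  [MeasurableSpace 𝔸] [MeasurableSingletonClass 𝔸] [DecidableEq 𝔸]
  [Fintype 𝕄] [MeasurableSpace 𝕄] [MeasurableSingletonClass 𝕄]
  [Fintype 𝕎] [MeasurableSpace 𝕎] [MeasurableSingletonClass 𝕎]
  {A : Ω → 𝔸} {M : Ω → 𝕄} {W : Ω → 𝕎}

theorem integral_ite_mul_eq_sum (hA : Measurable A) (hM : Measurable M) (hW : Measurable W)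
    (a : 𝔸) (f : 𝕄 × 𝕎 → ℝ) :
    ∫ ω, (if A ω = a then (1 : ℝ) else 0) * f (M ω, W ω) ∂P
      = ∑ m, ∑ w, P.real {ω | A ω = a ∧ M ω = m ∧ W ω = w} * f (m, w) := by
  have hS : MeasurableSet {ω | A ω = a} := hA (measurableSet_singleton a)
  have hMW : Measurable fun ω => (M ω, W ω) := hM.prodMk hW
  calc ∫ ω, (if A ω = a then (1 : ℝ) else 0) * f (M ω, W ω) ∂P
      = ∫ ω in {ω | A ω = a}, f (M ω, W ω) ∂P := by
        rw [← integral_indicator hS]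
        congr with ω
        simp only [ite_mul, one_mul, zero_mul, Set.indicator_apply, Set.mem_ofPred_eq]
    _ = ∑ m, ∑ w, P.real {ω | A ω = a ∧ M ω = m ∧ W ω = w} * f (m, w) := by
        rw [integral_comp_eq_sum_measureReal_preimage hMW f, Fintype.sum_prod_type]
        refine Finset.sum_congr rfl fun m _ => Finset.sum_congr rfl fun w _ => ?_
        rw [measureReal_restrict_apply (hMW (measurableSet_singleton _)), smul_eq_mul]
        congr 2
        ext ω
        simp only [Set.mem_inter_iff, Set.mem_preimage, Set.mem_singleton_iff, Prod.ext_iff,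
          Set.mem_ofPred_eq]
        tauto

theorem integral_ite_div_mul_eq_sum (hA : Measurable A) (hM : Measurable M)
    (hW : Measurable W) (a : 𝔸) (π : 𝕎 → ℝ) (f : 𝕄 × 𝕎 → ℝ) :
    ∫ ω, (if A ω = a then (1 : ℝ) else 0) / π (W ω) * f (M ω, W ω) ∂P
      = ∑ m, ∑ w, P.real {ω | A ω = a ∧ M ω = m ∧ W ω = w} * (f (m, w) / π w) := by
  rw [← integral_ite_mul_eq_sum hA hM hW a fun x => f x / π x.2]
  congr with ω
  ring

theorem integral_inverse_propensity_weighted_eq_sum_cond (hA : Measurable A) (hM : Measurable M)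
    (hW : Measurable W) (a : 𝔸) (π : 𝕎 → ℝ)
    (hπ : ∀ w, π w = ((P[|{ω | W ω = w}]) {ω | A ω = a}).toReal) (f : 𝕄 × 𝕎 → ℝ) :
    ∫ ω, (if A ω = a then (1 : ℝ) else 0) / π (W ω) * f (M ω, W ω) ∂P
      = ∑ w, (P {ω | W ω = w}).toReal
          * ∑ m, ((P[|{ω | A ω = a ∧ W ω = w}]) {ω | M ω = m}).toReal * f (m, w) := by
  rw [integral_ite_div_mul_eq_sum hA hM hW, Finset.sum_comm]
  refine Finset.sum_congr rfl fun w _ => ?_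
  rw [Finset.mul_sum]
  refine Finset.sum_congr rfl fun m _ => ?_
  have hW' : MeasurableSet {ω | W ω = w} := hW (measurableSet_singleton w)
  have hAW : MeasurableSet {ω | A ω = a ∧ W ω = w} := (hA (measurableSet_singleton a)).inter hW'
  have hAMW : {ω | M ω = m} ∩ {ω | A ω = a ∧ W ω = w} = {ω | A ω = a ∧ M ω = m ∧ W ω = w} := by
    ext ω
    simp only [Set.mem_inter_iff, Set.mem_ofPred_eq]
    tauto
  rw [hπ, toReal_cond_apply_eq_div P hW', toReal_cond_apply_eq_div P hAW, hAMW,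
    ← Set.ofPred_and, ← measureReal_def, div_div_eq_mul_div]
  ring

theorem integral_odds_ratio_weighted_eq (hA : Measurable A) (hM : Measurable M)
    (hW : Measurable W) (a a' : 𝔸)
    (hpos : ∀ m w, 0 < P {ω | A ω = a ∧ M ω = m ∧ W ω = w})
    (πA : 𝔸 → 𝕎 → ℝ) (hπA : ∀ α w, πA α w = ((P[|{ω | W ω = w}]) {ω | A ω = α}).toReal)
    (πAM : 𝔸 → 𝕄 → 𝕎 → ℝ)
    (hπAM : ∀ α m w, πAM α m w = ((P[|{ω | M ω = m ∧ W ω = w}]) {ω | A ω = α}).toReal)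
    (r : 𝕄 → 𝕎 → ℝ) (hr : ∀ m w, r m w = (πAM a' m w * πA a w) / (πAM a m w * πA a' w))
    (f : 𝕄 × 𝕎 → ℝ) :
    ∫ ω, (if A ω = a then (1 : ℝ) else 0) / πA a (W ω) * r (M ω) (W ω) * f (M ω, W ω) ∂P
      = ∫ ω, (if A ω = a' then (1 : ℝ) else 0) / πA a' (W ω) * f (M ω, W ω) ∂P := by
  simp only [mul_assoc]
  rw [integral_ite_div_mul_eq_sum hA hM hW a _ fun x => r x.1 x.2 * f x,
    integral_ite_div_mul_eq_sum hA hM hW]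
  refine Finset.sum_congr rfl fun m _ => Finset.sum_congr rfl fun w _ => ?_
  have hne {s : Set Ω} (hs : {ω | A ω = a ∧ M ω = m ∧ W ω = w} ⊆ s) : P.real s ≠ 0 :=
    (ENNReal.toReal_pos ((hpos m w).trans_le (measure_mono hs)).ne' (measure_ne_top _ _)).ne'
  have := hne (s := {ω | A ω = a ∧ M ω = m ∧ W ω = w}) le_rfl
  have := hne (s := {ω | M ω = m ∧ W ω = w}) fun ω hω => hω.2
  have := hne (s := {ω | A ω = a ∧ W ω = w}) fun ω hω => ⟨hω.1, hω.2.2⟩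
  have := hne (s := {ω | W ω = w}) fun ω hω => hω.2.2
  have hW' : MeasurableSet {ω | W ω = w} := hW (measurableSet_singleton w)
  have hMW : MeasurableSet {ω | M ω = m ∧ W ω = w} := (hM (measurableSet_singleton m)).inter hW'
  simp only [hr, hπA, hπAM, toReal_cond_apply_eq_div P hW', toReal_cond_apply_eq_div P hMW,
    ← Set.ofPred_and]
  field_simp

end Mediation

theorem mediational_weighting_identity
    {Ω : Type*} [MeasurableSpace Ω] (P : Measure Ω) [IsProbabilityMeasure P]
    {𝕄 𝕎 : Type*} [Fintype 𝕄] [MeasurableSpace 𝕄] [MeasurableSingletonClass 𝕄]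
    [Fintype 𝕎] [MeasurableSpace 𝕎] [MeasurableSingletonClass 𝕎]
    (A : Ω → Bool) (M : Ω → 𝕄) (W : Ω → 𝕎)
    (hA : Measurable A) (hM : Measurable M) (hW : Measurable W)
    (positivity : ∀ (α : Bool) (m : 𝕄) (w : 𝕎),
      0 < P {ω | A ω = α ∧ M ω = m ∧ W ω = w})
    (a a' : Bool)
    (πA : Bool → 𝕎 → ℝ)
    (hπA : ∀ (α : Bool) (w : 𝕎), πA α w = ((P[|{ω | W ω = w}]) {ω | A ω = α}).toReal)
    (πAM : Bool → 𝕄 → 𝕎 → ℝ)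
    (hπAM : ∀ (α : Bool) (m : 𝕄) (w : 𝕎),
      πAM α m w = ((P[|{ω | M ω = m ∧ W ω = w}]) {ω | A ω = α}).toReal)
    (r : 𝕄 → 𝕎 → ℝ)
    (hr : ∀ (m : 𝕄) (w : 𝕎),
      r m w = (πAM a' m w * πA a w) / (πAM a m w * πA a' w)) :
    ∀ h : 𝕄 × 𝕎 → ℝ,
      (∫ ω, ((if A ω = a then (1 : ℝ) else 0) / πA a (W ω)) * r (M ω) (W ω)
          * h (M ω, W ω) ∂P
        = ∫ ω, ((if A ω = a' then (1 : ℝ) else 0) / πA a' (W ω)) * h (M ω, W ω) ∂P)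
      ∧
      (∫ ω, ((if A ω = a' then (1 : ℝ) else 0) / πA a' (W ω)) * h (M ω, W ω) ∂P
        = ∑ w : 𝕎, (P {ω | W ω = w}).toReal
            * ∑ m : 𝕄, ((P[|{ω | A ω = a' ∧ W ω = w}]) {ω | M ω = m}).toReal
                * h (m, w)) := fun h =>
  ⟨integral_odds_ratio_weighted_eq hA hM hW a a' (positivity a) πA hπA πAM hπAM r hr h,
    integral_inverse_propensity_weighted_eq_sum_cond hA hM hW a' (πA a') (hπA a') h⟩
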